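/- If Q = T ⊗ T is the representation of SL(2,ℝ) on L²(ℝ²) given by Q(g)f(x₁,x₂) = f((b+dx₁)/(a+cx₁), (b+dx₂)/(a+cx₂))·(a+cx₁)^{-1}(a+cx₂)^{-1}, and J : L²(ν) → L²(ℝ²) is defined by (Jf)(x₁,x₂) = f(x₁,x₂)(x₁−x₂)^{-1} where dν = |x₁−x₂|^{-2}dx₁dx₂, then J is a unitary operator intertwining the natural (measure-preserving shift) action of SL(2,ℝ) on L²(ν) with Q. -/

import Mathlib

open MeasureTheory

/-- The measure `dν = |x₁ − x₂|⁻² dx₁ dx₂` on the plane. -/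
noncomputable def nuMeasure : Measure (ℝ × ℝ) :=
  (volume : Measure (ℝ × ℝ)).withDensity
    (fun p => ENNReal.ofReal (|p.1 - p.2| ^ (-2 : ℤ)))

/-- The Möbius action of `g ∈ SL(2,ℝ)` on a point of `ℝ`. -/
noncomputable def moeb (g : Matrix.SpecialLinearGroup (Fin 2) ℝ) (x : ℝ) : ℝ :=
  ((g : Matrix (Fin 2) (Fin 2) ℝ) 0 1 + (g : Matrix (Fin 2) (Fin 2) ℝ) 1 1 * x) /
    ((g : Matrix (Fin 2) (Fin 2) ℝ) 0 0 + (g : Matrix (Fin 2) (Fin 2) ℝ) 1 0 * x)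


/-!
`J` is multiplication by `w(x₁, x₂) = (x₁ - x₂)⁻¹`, and `dν = |w|² dx`, so multiplication by `w`
is an isometry `L²(ν) → L²(ℝ²)` whose inverse is multiplication by `w⁻¹` (`w ≠ 0` off the
null diagonal). The intertwining relation is then the pointwise identity
`g·x₁ - g·x₂ = (x₁ - x₂) / ((a + c x₁)(a + c x₂))`; it may be composed with almost-everywhere
equalities because each Möbius map has the Möbius map of `g⁻¹` as a differentiable left inverse
off one point, hence pulls null sets back to null sets.
-/

open scoped ENNReal

namespace MeasureTheory

theorem Measure.QuasiMeasurePreserving.of_leftInvOn_of_differentiableOn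
    {E : Type*} [NormedAddCommGroup E] [NormedSpace ℝ E] [FiniteDimensional ℝ E]
    [MeasurableSpace E] [BorelSpace E] {μ : Measure E} [μ.IsAddHaarMeasure] {f g : E → E}
    {s : Set E} (hf : Measurable f) (hs : ∀ᵐ x ∂μ, x ∈ s) (hgf : Set.LeftInvOn g f s)
    (hg : DifferentiableOn ℝ g (f '' s)) : Measure.QuasiMeasurePreserving f μ μ := by
  refine ⟨hf, .mk fun t ht ht0 => ?_⟩
  rw [Measure.map_apply hf ht]
  have hsub : f ⁻¹' t ⊆ g '' (t ∩ f '' s) ∪ sᶜ := fun x hx => by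
    by_cases hxs : x ∈ s
    · exact .inl ⟨f x, ⟨hx, x, hxs, rfl⟩, hgf hxs⟩
    · exact .inr hxs
  refine measure_mono_null hsub (measure_union_null ?_ (ae_iff.1 hs))
  exact addHaar_image_eq_zero_of_differentiableOn_of_addHaar_eq_zero μ
    (hg.mono Set.inter_subset_right) (measure_mono_null Set.inter_subset_left ht0)

section MulByWeight

variable {α : Type*} [MeasurableSpace α] {μ : Measure α} {p : ℝ≥0∞} {w : α → ℝ}

theorem eLpNorm_mul_eq_eLpNorm_withDensity (hp : p ≠ ∞) (hw : AEStronglyMeasurable w μ)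
    (f : α → ℝ) :
    eLpNorm (fun x => f x * w x) p μ
      = eLpNorm f p (μ.withDensity fun x => ‖w x‖ₑ ^ p.toReal) := by
  obtain rfl | hp0 := eq_or_ne p 0
  · simp
  simp only [eLpNorm_eq_lintegral_rpow_enorm_toReal hp0 hp]
  rw [lintegral_withDensity_eq_lintegral_mul_non_measurable₀ _
    (hw.enorm.pow_const _) (.of_forall fun _ => ENNReal.rpow_lt_top_of_nonneg
      ENNReal.toReal_nonneg enorm_ne_top)]
  simp only [Pi.mul_apply, enorm_mul, ENNReal.mul_rpow_of_nonneg _ _ ENNReal.toReal_nonneg,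
    mul_comm]

theorem absolutelyContinuous_withDensity_enorm_rpow (hw : AEStronglyMeasurable w μ)
    (hw0 : ∀ᵐ x ∂μ, w x ≠ 0) : μ ≪ μ.withDensity fun x => ‖w x‖ₑ ^ p.toReal :=
  withDensity_absolutelyContinuous' (hw.enorm.pow_const _)
    (hw0.mono fun _ hx => (ENNReal.rpow_pos (enorm_pos.2 hx) enorm_ne_top).ne')

theorem MemLp.mul_of_withDensity (hp : p ≠ ∞) (hw : AEStronglyMeasurable w μ)
    (hw0 : ∀ᵐ x ∂μ, w x ≠ 0) {f : α → ℝ}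
    (hf : MemLp f p (μ.withDensity fun x => ‖w x‖ₑ ^ p.toReal)) :
    MemLp (fun x => f x * w x) p μ :=
  ⟨(hf.1.mono_ac (absolutelyContinuous_withDensity_enorm_rpow hw hw0)).mul hw, by
    rw [eLpNorm_mul_eq_eLpNorm_withDensity hp hw]; exact hf.2⟩

theorem MemLp.mul_inv_withDensity (hp : p ≠ ∞) (hw : AEStronglyMeasurable w μ)
    (hw0 : ∀ᵐ x ∂μ, w x ≠ 0) {h : α → ℝ} (hh : MemLp h p μ) :
    MemLp (fun x => h x * (w x)⁻¹) p (μ.withDensity fun x => ‖w x‖ₑ ^ p.toReal) := by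
  refine ⟨(hh.1.mul hw.aemeasurable.inv.aestronglyMeasurable).mono_ac
    (withDensity_absolutelyContinuous _ _), ?_⟩
  rw [← eLpNorm_mul_eq_eLpNorm_withDensity hp hw, eLpNorm_congr_ae (g := h)]
  · exact hh.2
  · filter_upwards [hw0] with x hx
    rw [inv_mul_cancel_right₀ hx]

variable [Fact (1 ≤ p)]

noncomputable def mulLp (hp : p ≠ ∞) (hw : AEStronglyMeasurable w μ) (hw0 : ∀ᵐ x ∂μ, w x ≠ 0) :
    Lp ℝ p (μ.withDensity fun x => ‖w x‖ₑ ^ p.toReal) →ₗᵢ[ℝ] Lp ℝ p μ where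
  toFun f := ((Lp.memLp f).mul_of_withDensity hp hw hw0).toLp _
  map_add' f g := by
    rw [← MemLp.toLp_add]
    apply MemLp.toLp_congr
    filter_upwards [(absolutelyContinuous_withDensity_enorm_rpow hw hw0).ae_eq
      (Lp.coeFn_add f g)] with x hx
    rw [hx, Pi.add_apply, Pi.add_apply, add_mul]
  map_smul' c f := by
    rw [RingHom.id_apply, ← MemLp.toLp_const_smul]
    apply MemLp.toLp_congr
    filter_upwards [(absolutelyContinuous_withDensity_enorm_rpow hw hw0).ae_eq
      (Lp.coeFn_smul c f)] with x hx
    rw [hx, Pi.smul_apply, Pi.smul_apply, smul_eq_mul, smul_eq_mul, mul_assoc]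
  norm_map' f := by
    rw [LinearMap.coe_mk, AddHom.coe_mk, Lp.norm_toLp, eLpNorm_mul_eq_eLpNorm_withDensity hp hw,
      Lp.norm_def]

theorem coeFn_mulLp (hp : p ≠ ∞) (hw : AEStronglyMeasurable w μ) (hw0 : ∀ᵐ x ∂μ, w x ≠ 0)
    (f : Lp ℝ p (μ.withDensity fun x => ‖w x‖ₑ ^ p.toReal)) :
    mulLp hp hw hw0 f =ᵐ[μ] fun x => f x * w x :=
  ((Lp.memLp f).mul_of_withDensity hp hw hw0).coeFn_toLp

theorem mulLp_surjective (hp : p ≠ ∞) (hw : AEStronglyMeasurable w μ)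
    (hw0 : ∀ᵐ x ∂μ, w x ≠ 0) : Function.Surjective (mulLp hp hw hw0) := by
  intro h
  have hh := (Lp.memLp h).mul_inv_withDensity hp hw hw0
  refine ⟨hh.toLp _, Lp.ext ?_⟩
  filter_upwards [coeFn_mulLp hp hw hw0 (hh.toLp _),
    (absolutelyContinuous_withDensity_enorm_rpow hw hw0).ae_eq hh.coeFn_toLp, hw0]
    with x hx hhx hwx
  rw [hx, hhx, inv_mul_cancel_right₀ hwx]

noncomputable def mulLpEquiv (hp : p ≠ ∞) (hw : AEStronglyMeasurable w μ)
    (hw0 : ∀ᵐ x ∂μ, w x ≠ 0) :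
    Lp ℝ p (μ.withDensity fun x => ‖w x‖ₑ ^ p.toReal) ≃ₗᵢ[ℝ] Lp ℝ p μ :=
  .ofSurjective (mulLp hp hw hw0) (mulLp_surjective hp hw hw0)

theorem coeFn_mulLpEquiv (hp : p ≠ ∞) (hw : AEStronglyMeasurable w μ)
    (hw0 : ∀ᵐ x ∂μ, w x ≠ 0) (f : Lp ℝ p (μ.withDensity fun x => ‖w x‖ₑ ^ p.toReal)) :
    mulLpEquiv hp hw hw0 f =ᵐ[μ] fun x => f x * w x :=
  coeFn_mulLp hp hw hw0 f

theorem mulLpEquiv_ae_eq_comp (hp : p ≠ ∞) (hw : AEStronglyMeasurable w μ)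
    (hw0 : ∀ᵐ x ∂μ, w x ≠ 0) {T : α → α} (hT : Measure.QuasiMeasurePreserving T μ μ)
    {f fT : Lp ℝ p (μ.withDensity fun x => ‖w x‖ₑ ^ p.toReal)}
    (hfT : fT =ᵐ[μ.withDensity fun x => ‖w x‖ₑ ^ p.toReal] fun x => f (T x)) :
    mulLpEquiv hp hw hw0 fT =ᵐ[μ] fun x => mulLpEquiv hp hw hw0 f (T x) * (w x / w (T x)) := by
  filter_upwards [coeFn_mulLpEquiv hp hw hw0 fT, hT.ae (coeFn_mulLpEquiv hp hw hw0 f),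
    (absolutelyContinuous_withDensity_enorm_rpow hw hw0).ae_eq hfT, hT.ae hw0]
    with x hx hTx hfx hwTx
  rw [hx, hTx, hfx, mul_assoc, mul_div_cancel₀ _ hwTx]

end MulByWeight

end MeasureTheory

namespace Matrix.SpecialLinearGroup

theorem det_fin_two_eq (g : SpecialLinearGroup (Fin 2) ℝ) :
    g 0 0 * g 1 1 - g 0 1 * g 1 0 = 1 := by
  rw [← det_fin_two]
  exact g.det_coe

end Matrix.SpecialLinearGroup

open Matrix.SpecialLinearGroup

theorem moeb_sub_moeb (g : Matrix.SpecialLinearGroup (Fin 2) ℝ) {x y : ℝ}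
    (hx : g 0 0 + g 1 0 * x ≠ 0) (hy : g 0 0 + g 1 0 * y ≠ 0) :
    moeb g x - moeb g y = (x - y) / ((g 0 0 + g 1 0 * x) * (g 0 0 + g 1 0 * y)) := by
  rw [moeb, moeb, div_sub_div _ _ hx hy]
  congr 1
  linear_combination (x - y) * g.det_fin_two_eq

theorem moeb_mul_denom (g : Matrix.SpecialLinearGroup (Fin 2) ℝ) {x : ℝ}
    (hx : g 0 0 + g 1 0 * x ≠ 0) : moeb g x * (g 0 0 + g 1 0 * x) = g 0 1 + g 1 1 * x :=
  div_mul_cancel₀ _ hx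

theorem inv_denom_moeb_mul_denom_eq_one (g : Matrix.SpecialLinearGroup (Fin 2) ℝ) {x : ℝ}
    (hx : g 0 0 + g 1 0 * x ≠ 0) :
    (g⁻¹ 0 0 + g⁻¹ 1 0 * moeb g x) * (g 0 0 + g 1 0 * x) = 1 := by
  rw [SL2_inv_expl]
  simp only [Fin.isValue, Matrix.cons_val', Matrix.cons_val_zero, Matrix.cons_val_one,
    Matrix.cons_val_fin_one, neg_mul]
  linear_combination (-g 1 0) * moeb_mul_denom g hx + g.det_fin_two_eq

theorem moeb_inv_moeb (g : Matrix.SpecialLinearGroup (Fin 2) ℝ) {x : ℝ}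
    (hx : g 0 0 + g 1 0 * x ≠ 0) : moeb g⁻¹ (moeb g x) = x := by
  rw [moeb, div_eq_iff (left_ne_zero_of_mul_eq_one (inv_denom_moeb_mul_denom_eq_one g hx)),
    SL2_inv_expl]
  simp only [Fin.isValue, Matrix.cons_val', Matrix.cons_val_zero, Matrix.cons_val_one,
    Matrix.cons_val_fin_one, neg_mul]
  linear_combination moeb_mul_denom g hx

theorem differentiableOn_moeb (g : Matrix.SpecialLinearGroup (Fin 2) ℝ) :
    DifferentiableOn ℝ (moeb g) {x | g 0 0 + g 1 0 * x ≠ 0} :=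
  DifferentiableOn.div (by fun_prop) (by fun_prop) fun _ hx => hx

theorem ae_moeb_denom_ne_zero (g : Matrix.SpecialLinearGroup (Fin 2) ℝ) :
    ∀ᵐ x : ℝ, g 0 0 + g 1 0 * x ≠ 0 := by
  simp only [ae_iff, not_not]
  refine Set.Subsingleton.measure_zero (fun x hx y hy => ?_) _
  have hc : g 1 0 ≠ 0 := fun hc => by
    have := g.det_fin_two_eq
    simp_all
  exact mul_left_cancel₀ hc (add_left_cancel (hx.trans hy.symm))

theorem measurable_moeb (g : Matrix.SpecialLinearGroup (Fin 2) ℝ) : Measurable (moeb g) := by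
  unfold moeb
  fun_prop

theorem quasiMeasurePreserving_moeb (g : Matrix.SpecialLinearGroup (Fin 2) ℝ) :
    Measure.QuasiMeasurePreserving (moeb g) :=
  .of_leftInvOn_of_differentiableOn (measurable_moeb g) (ae_moeb_denom_ne_zero g)
    (fun _ hx => moeb_inv_moeb g hx) <| (differentiableOn_moeb g⁻¹).mono <| by
      rintro _ ⟨x, hx, rfl⟩
      exact left_ne_zero_of_mul_eq_one (inv_denom_moeb_mul_denom_eq_one g hx)

theorem ae_fst_ne_snd : ∀ᵐ p : ℝ × ℝ, p.1 ≠ p.2 :=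
  (Measure.ae_prod_iff_ae_ae (measurableSet_eq_fun measurable_fst measurable_snd).compl).2 <|
    .of_forall fun x => (Measure.ae_ne volume x).mono fun _ h => Ne.symm h

theorem nuMeasure_eq_withDensity :
    nuMeasure = volume.withDensity fun p : ℝ × ℝ => ‖(p.1 - p.2)⁻¹‖ₑ ^ (2 : ℝ≥0∞).toReal := by
  rw [nuMeasure]
  congr 1
  ext p
  rw [← ofReal_norm, ENNReal.toReal_ofNat,
    ENNReal.ofReal_rpow_of_nonneg (norm_nonneg _) zero_le_two]
  simp

/-- The operator `J : L²(ν) → L²(ℝ²)`, `(Jf)(x₁,x₂) = f(x₁,x₂)(x₁−x₂)⁻¹`, is a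
unitary operator intertwining the measure-preserving shift action of `SL(2,ℝ)` on
`L²(ν)` with the representation
`Q(g)h(x₁,x₂) = h(g·x₁, g·x₂)(a+cx₁)⁻¹(a+cx₂)⁻¹ = (T ⊗ T)(g) h`. -/
theorem J_unitary_intertwiner :
    ∃ J : Lp ℝ 2 nuMeasure ≃ₗᵢ[ℝ] Lp ℝ 2 (volume : Measure (ℝ × ℝ)),
      (∀ f : Lp ℝ 2 nuMeasure,
        ⇑(J f) =ᵐ[volume] fun p : ℝ × ℝ => f p * (p.1 - p.2)⁻¹) ∧
      (∀ (g : Matrix.SpecialLinearGroup (Fin 2) ℝ) (f fg : Lp ℝ 2 nuMeasure),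
        (⇑fg =ᵐ[nuMeasure] fun p : ℝ × ℝ => f (moeb g p.1, moeb g p.2)) →
        ⇑(J fg) =ᵐ[volume] fun p : ℝ × ℝ =>
          (J f) (moeb g p.1, moeb g p.2) *
            ((g : Matrix (Fin 2) (Fin 2) ℝ) 0 0 + (g : Matrix (Fin 2) (Fin 2) ℝ) 1 0 * p.1)⁻¹ *
            ((g : Matrix (Fin 2) (Fin 2) ℝ) 0 0 + (g : Matrix (Fin 2) (Fin 2) ℝ) 1 0 * p.2)⁻¹) := by
  have hw : AEStronglyMeasurable (fun p : ℝ × ℝ => (p.1 - p.2)⁻¹) volume := by fun_prop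
  have hw0 : ∀ᵐ p : ℝ × ℝ, (p.1 - p.2)⁻¹ ≠ 0 :=
    ae_fst_ne_snd.mono fun p hp => inv_ne_zero (sub_ne_zero.2 hp)
  rw [nuMeasure_eq_withDensity]
  refine ⟨mulLpEquiv ENNReal.ofNat_ne_top hw hw0, coeFn_mulLpEquiv _ hw hw0, fun g f fg hfg => ?_⟩
  have hT : Measure.QuasiMeasurePreserving (fun p : ℝ × ℝ => (moeb g p.1, moeb g p.2)) :=
    QuasiMeasurePreserving.prodMap (quasiMeasurePreserving_moeb g) (quasiMeasurePreserving_moeb g)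
  filter_upwards [mulLpEquiv_ae_eq_comp _ hw hw0 hT hfg, ae_fst_ne_snd,
    Measure.quasiMeasurePreserving_fst.ae (ae_moeb_denom_ne_zero g),
    Measure.quasiMeasurePreserving_snd.ae (ae_moeb_denom_ne_zero g)] with p hp hne h1 h2
  rw [hp, moeb_sub_moeb g h1 h2]
  field_simp
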